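/- For every m ∈ ℕ there is a constant C > 0 with the following property: whenever N, x, y ∈ S¹ ⊆ ℝ² satisfy ⟨x,N⟩ = 0, and Q is a polynomial on ℝ² (with complex coefficients) of degree at most m satisfying Q(ξ + sN) = Q(ξ) for all ξ ∈ ℝ² and s ∈ ℝ, then for every t ≥ 1 one has Q̃_{span{y}}(0,t) ≥ C·|⟨y,x⟩|^m·Q̃(0,t). -/

import Mathlib

/-!
Invariance under translation along `N` makes `Q` a function of `⟪x, η⟫` alone:
`Q(η) = p(⟪x, η⟫)` with `p(s) = Q(s x)` a one-variable polynomial of degree `≤ m`.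
On the ball of radius `t` the argument `⟪x, η⟫` sweeps `[-t, t]`, on `span {y}` it sweeps
`[-c t, c t]` with `c = |⟪y, x⟫|`. Lagrange interpolation at `m + 1` equally spaced nodes of the
small interval bounds `|p|` on `[-t, t]` by `(m + 1) ((m + 1) / c) ^ m` times its maximum on
`[-c t, c t]`, so `C = (m + 1) ^ -(m + 1)` works.
-/

open MvPolynomial Filter Topology RealInnerProductSpace

noncomputable section

/-- Evaluation of a complex-coefficient polynomial at a real point of `ℝ^d`. -/
def evalP {d : ℕ} (P : MvPolynomial (Fin d) ℂ) (x : EuclideanSpace ℝ (Fin d)) : ℂ :=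
  MvPolynomial.eval (fun i => (x i : ℂ)) P

/-- The shifted polynomial `P_ξ(η) = P(η + ξ)`. -/
def shiftP {d : ℕ} (P : MvPolynomial (Fin d) ℂ) (ξ : EuclideanSpace ℝ (Fin d)) :
    MvPolynomial (Fin d) ℂ :=
  MvPolynomial.aeval (fun i => MvPolynomial.X i + MvPolynomial.C ((ξ i : ℂ))) P

/-- `Q̃(0) = sqrt (∑_α |Q^{(α)}(0)|²)`, using `Q^{(α)}(0) = α! ⬝ coeff α Q`. -/
def tildeZero {d : ℕ} (Q : MvPolynomial (Fin d) ℂ) : ℝ :=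
  Real.sqrt (∑ α ∈ Q.support,
    ((∏ i, Nat.factorial (α i) : ℝ) * ‖MvPolynomial.coeff α Q‖) ^ 2)

/-- The normalized shifted polynomial `P_ξ / P̃_ξ(0)`. -/
def normShift {d : ℕ} (P : MvPolynomial (Fin d) ℂ) (ξ : EuclideanSpace ℝ (Fin d)) :
    MvPolynomial (Fin d) ℂ :=
  ((tildeZero (shiftP P ξ) : ℂ))⁻¹ • shiftP P ξ

/-- `L(P)`: localizations of `P` at infinity (limits taken in the norm `Q ↦ Q̃(0)`). -/
def Lset {d : ℕ} (P : MvPolynomial (Fin d) ℂ) : Set (MvPolynomial (Fin d) ℂ) :=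
  {Q | ∃ ξ : ℕ → EuclideanSpace ℝ (Fin d),
    Tendsto (fun n => ‖ξ n‖) atTop atTop ∧
    Tendsto (fun n => tildeZero (normShift P (ξ n) - Q)) atTop (nhds 0)}

/-- `L_N(P)`: localizations of `P` at infinity in direction `N`. -/
def LNset {d : ℕ} (P : MvPolynomial (Fin d) ℂ) (N : EuclideanSpace ℝ (Fin d)) :
    Set (MvPolynomial (Fin d) ℂ) :=
  {Q | ∃ ξ : ℕ → EuclideanSpace ℝ (Fin d),
    Tendsto (fun n => ‖ξ n‖) atTop atTop ∧
    Tendsto (fun n => ‖ξ n‖⁻¹ • ξ n) atTop (nhds N) ∧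
    Tendsto (fun n => tildeZero (normShift P (ξ n) - Q)) atTop (nhds 0)}

/-- `P̃_V(ξ,t) = sup {|P(ξ+η)| : η ∈ V, |η| ≤ t}`. -/
def tildeSupV {d : ℕ} (P : MvPolynomial (Fin d) ℂ)
    (V : Submodule ℝ (EuclideanSpace ℝ (Fin d)))
    (ξ : EuclideanSpace ℝ (Fin d)) (t : ℝ) : ℝ :=
  sSup ((fun η => ‖evalP P (ξ + η)‖) '' {η | η ∈ V ∧ ‖η‖ ≤ t})

/-- `P̃(ξ,t) = P̃_{ℝ^d}(ξ,t)`. -/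
def tildeSup {d : ℕ} (P : MvPolynomial (Fin d) ℂ)
    (ξ : EuclideanSpace ℝ (Fin d)) (t : ℝ) : ℝ :=
  tildeSupV P ⊤ ξ t

/-- The filter `|ξ| → ∞` on `ℝ^d`. -/
def toInfty (d : ℕ) : Filter (EuclideanSpace ℝ (Fin d)) :=
  Filter.comap (fun ξ => ‖ξ‖) Filter.atTop

/-- `σ_P(V) = inf_{t ≥ 1} liminf_{|ξ|→∞} P̃_V(ξ,t) / P̃(ξ,t)`. -/
def sigmaP {d : ℕ} (P : MvPolynomial (Fin d) ℂ)
    (V : Submodule ℝ (EuclideanSpace ℝ (Fin d))) : ℝ :=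
  sInf {r | ∃ t : ℝ, 1 ≤ t ∧
    r = Filter.liminf (fun ξ => tildeSupV P V ξ t / tildeSup P ξ t) (toInfty d)}

/-- `σ_P(y) = σ_P(span {y})`. -/
def sigmaPt {d : ℕ} (P : MvPolynomial (Fin d) ℂ) (y : EuclideanSpace ℝ (Fin d)) : ℝ :=
  sigmaP P (Submodule.span ℝ {y})

/-- The reflected polynomial `P̌(x) = P(-x)`. -/
def checkP {d : ℕ} (P : MvPolynomial (Fin d) ℂ) : MvPolynomial (Fin d) ℂ :=
  MvPolynomial.aeval (fun i => -MvPolynomial.X i) P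

/-- `Λ(Q) = {η : Q(ξ + tη) = Q(ξ) for all ξ, t}` as a set. -/
def LambdaSet {d : ℕ} (Q : MvPolynomial (Fin d) ℂ) : Set (EuclideanSpace ℝ (Fin d)) :=
  {η | ∀ (ξ : EuclideanSpace ℝ (Fin d)) (t : ℝ), evalP Q (ξ + t • η) = evalP Q ξ}

/-- The dual cone `Γ° = {ξ : ⟨y,ξ⟩ ≥ 0 for all y ∈ Γ}`. -/
def dualCone {d : ℕ} (Γ : Set (EuclideanSpace ℝ (Fin d))) : Set (EuclideanSpace ℝ (Fin d)) :=
  {ξ | ∀ y ∈ Γ, 0 ≤ ⟪y, ξ⟫}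

section Interpolation

open Polynomial

variable {𝕜 : Type*} [NormedField 𝕜] {m : ℕ} {v : Fin (m + 1) → 𝕜} {δ D : ℝ} {s : 𝕜}

theorem Lagrange.norm_eval_basis_le (hδ : 0 < δ) (hsep : ∀ j k, j ≠ k → δ ≤ ‖v j - v k‖)
    (hs : ∀ k, ‖s - v k‖ ≤ D) (j : Fin (m + 1)) :
    ‖(Lagrange.basis Finset.univ v j).eval s‖ ≤ (D / δ) ^ m := by
  rw [Lagrange.basis, Polynomial.eval_prod, norm_prod]
  calc ∏ k ∈ Finset.univ.erase j, ‖(Lagrange.basisDivisor (v j) (v k)).eval s‖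
      ≤ ∏ _k ∈ Finset.univ.erase j, D / δ := by
        refine Finset.prod_le_prod (fun _ _ => norm_nonneg _) fun k hk => ?_
        have hjk := hsep j k (Finset.ne_of_mem_erase hk).symm
        simp only [Lagrange.basisDivisor, Polynomial.eval_mul, Polynomial.eval_C,
          Polynomial.eval_sub, Polynomial.eval_X, inv_mul_eq_div, norm_div]
        exact div_le_div₀ ((norm_nonneg _).trans (hs k)) (hs k) hδ hjk
    _ = (D / δ) ^ m := by rw [Finset.prod_const, Finset.card_erase_of_mem (Finset.mem_univ j)]; simp

theorem Polynomial.norm_eval_le_of_norm_eval_nodes_le {p : 𝕜[X]} (hp : p.natDegree ≤ m)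
    (hδ : 0 < δ) (hsep : ∀ j k, j ≠ k → δ ≤ ‖v j - v k‖) (hs : ∀ k, ‖s - v k‖ ≤ D) {M : ℝ}
    (hM : ∀ j, ‖p.eval (v j)‖ ≤ M) :
    ‖p.eval s‖ ≤ (m + 1) * (D / δ) ^ m * M := by
  have hinj : Set.InjOn v (Finset.univ : Finset (Fin (m + 1))) := fun j _ k _ hjk => by
    by_contra hne
    have := hsep j k hne
    rw [hjk, sub_self, norm_zero] at this
    linarith
  have hdeg : p.degree < (Finset.univ : Finset (Fin (m + 1))).card := by
    rw [Finset.card_univ, Fintype.card_fin]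
    exact degree_le_natDegree.trans_lt (by exact_mod_cast Nat.lt_succ_of_le hp)
  have hM0 : 0 ≤ M := (norm_nonneg _).trans (hM 0)
  rw [Lagrange.eq_interpolate hinj hdeg, Lagrange.interpolate_apply, eval_finsetSum]
  calc ‖∑ j, (C (p.eval (v j)) * Lagrange.basis Finset.univ v j).eval s‖
      ≤ ∑ _j : Fin (m + 1), M * (D / δ) ^ m := by
        refine (norm_sum_le _ _).trans (Finset.sum_le_sum fun j _ => ?_)
        rw [Polynomial.eval_mul, Polynomial.eval_C, norm_mul]
        exact mul_le_mul (hM j) (Lagrange.norm_eval_basis_le hδ hsep hs j) (norm_nonneg _) hM0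
    _ = (m + 1) * (D / δ) ^ m * M := by simp; ring

end Interpolation

def equispacedNodes (m : ℕ) (a : ℝ) (j : Fin (m + 1)) : ℝ :=
  a * (2 * (j / (m + 1)) - 1)

theorem abs_equispacedNodes_le {m : ℕ} {a : ℝ} (ha : 0 ≤ a) (j : Fin (m + 1)) :
    |equispacedNodes m a j| ≤ a := by
  have hj1 : (j : ℝ) / (m + 1) < 1 := by
    rw [div_lt_one (by positivity)]
    exact_mod_cast j.is_lt
  have hj0 : 0 ≤ (j : ℝ) / (m + 1) := by positivity
  rw [equispacedNodes, abs_mul, abs_of_nonneg ha]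
  exact mul_le_of_le_one_right ha (abs_le.2 ⟨by linarith, by linarith⟩)

theorem le_abs_equispacedNodes_sub {m : ℕ} {a : ℝ} (ha : 0 ≤ a) {j k : Fin (m + 1)}
    (hjk : j ≠ k) : 2 * a / (m + 1) ≤ |equispacedNodes m a j - equispacedNodes m a k| := by
  have hjk' : (1 : ℝ) ≤ |(j : ℝ) - k| := by
    have := Int.one_le_abs (sub_ne_zero.2 (Int.ofNat_inj.not.2 (Fin.val_ne_of_ne hjk)))
    exact_mod_cast this
  calc 2 * a / (m + 1) ≤ 2 * a / (m + 1) * |(j : ℝ) - k| :=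
        le_mul_of_one_le_right (by positivity) hjk'
    _ = |equispacedNodes m a j - equispacedNodes m a k| := by
        rw [show equispacedNodes m a j - equispacedNodes m a k = 2 * a / (m + 1) * (j - k) by
          simp only [equispacedNodes]; ring, abs_mul,
          abs_of_nonneg (by positivity : (0 : ℝ) ≤ 2 * a / (m + 1))]

theorem Polynomial.pow_mul_norm_eval_le {p : Polynomial ℂ} {m : ℕ} (hp : p.natDegree ≤ m)
    {c t M : ℝ} (hc0 : 0 ≤ c) (hc1 : c ≤ 1) (ht : 0 < t)
    (hM : ∀ u : ℝ, |u| ≤ c * t → ‖p.eval (u : ℂ)‖ ≤ M) {s : ℝ} (hs : |s| ≤ t) :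
    c ^ m * ‖p.eval (s : ℂ)‖ ≤ (m + 1) ^ (m + 1) * M := by
  have hM0 : 0 ≤ M := (norm_nonneg _).trans (hM 0 (by simp; positivity))
  rcases hc0.eq_or_lt with rfl | hc
  · rcases m with _ | m
    · rw [eq_C_of_natDegree_le_zero hp] at hM ⊢
      simpa using hM 0 (by simp)
    · rw [zero_pow m.succ_ne_zero, zero_mul]
      positivity
  have ha : 0 < c * t := mul_pos hc ht
  set r := equispacedNodes m (c * t)
  have hsep : ∀ j k, j ≠ k → 2 * (c * t) / (m + 1) ≤ ‖(r j : ℂ) - r k‖ := fun j k hjk => by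
    rw [← Complex.ofReal_sub, Complex.norm_real, Real.norm_eq_abs]
    exact le_abs_equispacedNodes_sub ha.le hjk
  have hdist : ∀ k, ‖(s : ℂ) - r k‖ ≤ 2 * t := fun k => by
    rw [← Complex.ofReal_sub, Complex.norm_real, Real.norm_eq_abs]
    linarith [abs_sub s (r k), abs_equispacedNodes_le ha.le k (m := m),
      mul_le_of_le_one_left ht.le hc1]
  calc c ^ m * ‖p.eval (s : ℂ)‖
      ≤ c ^ m * ((m + 1) * (2 * t / (2 * (c * t) / (m + 1))) ^ m * M) :=
        mul_le_mul_of_nonneg_left (norm_eval_le_of_norm_eval_nodes_le hp (by positivity) hsep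
          hdist fun j => hM _ (abs_equispacedNodes_le ha.le j)) (by positivity)
    _ = (m + 1) ^ (m + 1) * M := by
        rw [show 2 * t / (2 * (c * t) / (m + 1)) = (m + 1) / c by field_simp, div_pow]
        field_simp
        ring

theorem eq_inner_smul_add_inner_smul_of_finrank_eq_two {E : Type*} [NormedAddCommGroup E]
    [InnerProductSpace ℝ E] (hE : Module.finrank ℝ E = 2) {x N : E} (hx : ‖x‖ = 1)
    (hN : ‖N‖ = 1) (hxN : ⟪x, N⟫ = 0) (η : E) :
    η = ⟪x, η⟫ • x + ⟪N, η⟫ • N := by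
  have hon : Orthonormal ℝ ![x, N] := by
    rw [orthonormal_iff_ite]
    intro i j
    fin_cases i <;> fin_cases j <;>
      simp [hx, hN, hxN, real_inner_comm x N]
  let b := (basisOfOrthonormalOfCardEqFinrank hon (by simp [hE])).toOrthonormalBasis
    (by rw [coe_basisOfOrthonormalOfCardEqFinrank]; exact hon)
  simpa [b, Fin.sum_univ_two] using (b.sum_repr' η).symm

section Restriction

variable {d : ℕ}

theorem MvPolynomial.polynomial_eval_aeval {σ R : Type*} [CommSemiring R] (g : σ → Polynomial R)
    (z : R) (Q : MvPolynomial σ R) :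
    (aeval g Q).eval z = MvPolynomial.eval (fun i => (g i).eval z) Q := by
  induction Q using MvPolynomial.induction_on with
  | C a => simp
  | add p q hp hq => simp [hp, hq]
  | mul_X p i hp => simp [hp]

theorem MvPolynomial.natDegree_aeval_le {σ R : Type*} [CommSemiring R] (g : σ → Polynomial R)
    (hg : ∀ i, (g i).natDegree ≤ 1) (Q : MvPolynomial σ R) :
    (aeval g Q).natDegree ≤ Q.totalDegree := by
  rw [aeval_def, eval₂_eq]
  refine Polynomial.natDegree_sum_le_of_forall_le _ _ fun α hα => ?_
  refine (Polynomial.natDegree_C_mul_le _ _).trans <| (Polynomial.natDegree_prod_le _ _).trans ?_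
  refine le_trans (Finset.sum_le_sum fun i _ => ?_) (le_totalDegree hα)
  exact Polynomial.natDegree_pow_le.trans (mul_le_of_le_one_right' (hg i))

def lineRestrict (Q : MvPolynomial (Fin d) ℂ) (x : EuclideanSpace ℝ (Fin d)) : Polynomial ℂ :=
  aeval (fun i => Polynomial.C (x i : ℂ) * Polynomial.X) Q

theorem eval_lineRestrict (Q : MvPolynomial (Fin d) ℂ) (x : EuclideanSpace ℝ (Fin d)) (s : ℝ) :
    (lineRestrict Q x).eval (s : ℂ) = evalP Q (s • x) := by
  simp [lineRestrict, evalP, polynomial_eval_aeval, mul_comm (s : ℂ)]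

theorem natDegree_lineRestrict_le (Q : MvPolynomial (Fin d) ℂ) (x : EuclideanSpace ℝ (Fin d)) :
    (lineRestrict Q x).natDegree ≤ Q.totalDegree :=
  natDegree_aeval_le _
    (fun _ => (Polynomial.natDegree_C_mul_le _ _).trans Polynomial.natDegree_X_le) Q

end Restriction

theorem evalP_eq_eval_lineRestrict {Q : MvPolynomial (Fin 2) ℂ} {x N : EuclideanSpace ℝ (Fin 2)}
    (hx : ‖x‖ = 1) (hN : ‖N‖ = 1) (hxN : ⟪x, N⟫ = 0)
    (hQ : ∀ (ξ : EuclideanSpace ℝ (Fin 2)) (s : ℝ), evalP Q (ξ + s • N) = evalP Q ξ)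
    (η : EuclideanSpace ℝ (Fin 2)) :
    evalP Q η = (lineRestrict Q x).eval (⟪x, η⟫ : ℂ) := by
  rw [eval_lineRestrict]
  conv_lhs => rw [eq_inner_smul_add_inner_smul_of_finrank_eq_two finrank_euclideanSpace_fin
    hx hN hxN η]
  exact hQ _ _

section SupOverBall

variable {d : ℕ} (P : MvPolynomial (Fin d) ℂ) {V : Submodule ℝ (EuclideanSpace ℝ (Fin d))}
  {ξ : EuclideanSpace ℝ (Fin d)} {t : ℝ}

theorem continuous_evalP : Continuous (evalP P) :=
  (continuous_eval P).comp (continuous_pi fun i => Complex.continuous_ofReal.comp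
    (PiLp.continuous_apply 2 _ i))

theorem bddAbove_norm_evalP_image :
    BddAbove ((fun η => ‖evalP P (ξ + η)‖) '' {η | η ∈ V ∧ ‖η‖ ≤ t}) := by
  have hcont : Continuous fun η => ‖evalP P (ξ + η)‖ :=
    ((continuous_evalP P).comp (continuous_const.add continuous_id)).norm
  refine ((isCompact_closedBall 0 t).image hcont).bddAbove.mono ?_
  exact Set.image_mono fun η hη => mem_closedBall_zero_iff.2 hη.2

variable {P}

theorem norm_evalP_le_tildeSupV {η : EuclideanSpace ℝ (Fin d)} (hηV : η ∈ V) (hη : ‖η‖ ≤ t) :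
    ‖evalP P (ξ + η)‖ ≤ tildeSupV P V ξ t :=
  le_csSup (bddAbove_norm_evalP_image P) ⟨η, ⟨hηV, hη⟩, rfl⟩

theorem mul_tildeSupV_le {k M : ℝ} (hk : 0 ≤ k) (ht : 0 ≤ t)
    (h : ∀ η ∈ V, ‖η‖ ≤ t → k * ‖evalP P (ξ + η)‖ ≤ M) :
    k * tildeSupV P V ξ t ≤ M := by
  rw [tildeSupV, ← smul_eq_mul, ← Real.sSup_smul_of_nonneg hk]
  refine csSup_le ⟨_, Set.smul_mem_smul_set ⟨0, ⟨V.zero_mem, by simpa using ht⟩, rfl⟩⟩ ?_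
  rintro _ ⟨_, ⟨η, ⟨hηV, hη⟩, rfl⟩, rfl⟩
  exact h η hηV hη

end SupOverBall

/-- For every `m` there is `C > 0` such that for all `N, x, y ∈ S¹` with `⟨x,N⟩ = 0` and
every polynomial `Q` on `ℝ²` of degree at most `m` with `Q(ξ + sN) = Q(ξ)` for all `ξ, s`,
one has `Q̃_{span{y}}(0,t) ≥ C·|⟨y,x⟩|^m·Q̃(0,t)` for all `t ≥ 1`. -/
theorem stmt8 (m : ℕ) :
    ∃ C : ℝ, 0 < C ∧ ∀ N x y : EuclideanSpace ℝ (Fin 2),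
      ‖N‖ = 1 → ‖x‖ = 1 → ‖y‖ = 1 → ⟪x, N⟫ = 0 →
      ∀ Q : MvPolynomial (Fin 2) ℂ, Q.totalDegree ≤ m →
        (∀ (ξ : EuclideanSpace ℝ (Fin 2)) (s : ℝ), evalP Q (ξ + s • N) = evalP Q ξ) →
        ∀ t : ℝ, 1 ≤ t →
          tildeSupV Q (Submodule.span ℝ {y}) 0 t ≥ C * |⟪y, x⟫| ^ m * tildeSup Q 0 t := by
  refine ⟨((m + 1 : ℝ) ^ (m + 1))⁻¹, by positivity, ?_⟩
  intro N x y hN hx hy hxN Q hQdeg hQ t ht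
  set p := lineRestrict Q x
  set c := ⟪y, x⟫
  have hQp := evalP_eq_eval_lineRestrict hx hN hxN hQ
  have hc1 : |c| ≤ 1 := by simpa [hx, hy] using abs_real_inner_le_norm y x
  have hline : ∀ u : ℝ, |u| ≤ |c| * t →
      ‖p.eval (u : ℂ)‖ ≤ tildeSupV Q (Submodule.span ℝ {y}) 0 t := by
    intro u hu
    -- if `c = 0` then `u = 0`, and the junk value `u / 0 = 0` still gives the right point
    have hinner : ⟪x, (u / c) • y⟫ = u := by
      rw [real_inner_smul_right, real_inner_comm]
      exact div_mul_cancel_of_imp fun hc => by simpa [hc] using hu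
    have hnorm : ‖(u / c) • y‖ ≤ t := by
      rw [norm_smul, hy, mul_one, Real.norm_eq_abs, abs_div]
      exact div_le_of_le_mul₀ (abs_nonneg _) (by linarith) (by linarith)
    simpa [hQp, hinner] using norm_evalP_le_tildeSupV (P := Q) (ξ := 0)
      (Submodule.smul_mem _ _ (Submodule.mem_span_singleton_self y)) hnorm
  rw [ge_iff_le, mul_assoc, inv_mul_le_iff₀ (by positivity)]
  refine mul_tildeSupV_le (by positivity) (by linarith) fun η _ hη => ?_
  rw [zero_add, hQp]
  have hxη : |⟪x, η⟫| ≤ t :=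
    (abs_real_inner_le_norm x η).trans (by rwa [hx, one_mul])
  exact Polynomial.pow_mul_norm_eval_le ((natDegree_lineRestrict_le Q x).trans hQdeg)
    (abs_nonneg c) hc1 (by linarith) hline hxη

end
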